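/- Let d ≥ 2, let e be a directed edge of the Kautz digraph K(d,D), and let k be an integer with 2 ≤ k ≤ D. Then U_{k−1}(e) ≥ ((k−1)/(d·k))·U_k(e). -/

import Mathlib

open scoped BigOperators Classical

namespace Kautz

/-- A vertex of the Kautz digraph `K(d,D)`: a word of length `D` over the
alphabet `{0,1,…,d}` in which adjacent letters are distinct. -/
structure Vertex (d D : ℕ) where
  word : List (Fin (d+1))
  length_eq : word.length = D
  chain : word.Chain' (· ≠ ·)

/-- Adjacency in `K(d,D)`: there is an edge `u → v` iff some word `w` of length
`D+1` with adjacent letters distinct has `u` as its prefix of length `D` and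
`v` as its suffix of length `D`. -/
def Adj {d D : ℕ} (u v : Vertex d D) : Prop :=
  ∃ w : List (Fin (d+1)), w.length = D + 1 ∧ w.Chain' (· ≠ ·) ∧
    u.word = w.dropLast ∧ v.word = w.tail

/-- A directed edge of `K(d,D)`. -/
structure Edge (d D : ℕ) where
  src : Vertex d D
  tgt : Vertex d D
  adj : Adj src tgt

/-- The edge-word `w(e) = a₀a₁⋯a_D` of an edge `e : u → v`, namely `u`
followed by the last letter of `v`. -/
def Edge.word {d D : ℕ} (e : Edge d D) : List (Fin (d+1)) :=
  e.src.word ++ e.tgt.word.drop (D - 1)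

/-- `p` is a walk from `x` to `y`, recorded as the list of successive vertices. -/
def IsWalk {d D : ℕ} (p : List (Vertex d D)) (x y : Vertex d D) : Prop :=
  p.head? = some x ∧ p.getLast? = some y ∧ p.Chain' Adj

/-- Directed graph distance in `K(d,D)`. -/
noncomputable def dist {d D : ℕ} (x y : Vertex d D) : ℕ :=
  sInf {k | ∃ p : List (Vertex d D), IsWalk p x y ∧ p.length = k + 1}

/-- `N(e;k,t)`: the number of ordered pairs `(x,y)` with `dist x y = k` such
that some geodesic (walk of length `k = dist x y`) from `x` to `y` uses `e` as
its `t`-th edge. -/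
noncomputable def N {d D : ℕ} (e : Edge d D) (k t : ℕ) : ℕ :=
  Set.ncard {xy : Vertex d D × Vertex d D |
    dist xy.1 xy.2 = k ∧
    ∃ p : List (Vertex d D), IsWalk p xy.1 xy.2 ∧ p.length = k + 1 ∧
      p[t-1]? = some e.src ∧ p[t]? = some e.tgt}

/-- `U_k(e) = ∑_{t=1}^{k} N(e;k,t)`. -/
noncomputable def U {d D : ℕ} (e : Edge d D) (k : ℕ) : ℕ :=
  ∑ t ∈ Finset.Icc 1 k, N e k t

/-- `cong(e) = ∑_{k=1}^{D} U_k(e)`. -/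
noncomputable def cong {d D : ℕ} (e : Edge d D) : ℕ :=
  ∑ k ∈ Finset.Icc 1 D, U e k

/-- `τ(d,D) = (D−1)·d^{D−2} + D·d^{D−1}`. -/
def tau (d D : ℕ) : ℕ := (D - 1) * d ^ (D - 2) + D * d ^ (D - 1)

/-- A word has a border: some proper nonempty prefix equals the suffix of the
same length. -/
def HasBorder {α : Type*} (w : List α) : Prop :=
  ∃ ℓ, 1 ≤ ℓ ∧ ℓ ≤ w.length - 1 ∧ w.take ℓ = w.drop (w.length - ℓ)

/-- An unbordered word. -/
def Unbordered {α : Type*} (w : List α) : Prop := ¬ HasBorder w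

/-- A square-free word: no nonempty factor of the form `XX`. -/
def SquareFree {α : Type*} (w : List α) : Prop :=
  ¬ ∃ X : List α, X ≠ [] ∧ (X ++ X) <:+: w

/-- A `7/4⁺`-power-free word: no factor `x^k y` with `x` nonempty, `k ≥ 1`,
`y` a prefix of `x`, and `(k·|x| + |y|)/|x| > 7/4`. -/
def SevenFourthsPlusFree {α : Type*} (w : List α) : Prop :=
  ¬ ∃ (x y : List α) (k : ℕ), x ≠ [] ∧ 1 ≤ k ∧ y <+: x ∧
    ((List.replicate k x).flatten ++ y) <:+: w ∧
    7 * x.length < 4 * (k * x.length + y.length)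

/-- A word over `{0,1,…,d}` is ternary if it uses only the letters `{0,1,2}`. -/
def IsTernary {n : ℕ} (w : List (Fin n)) : Prop := ∀ a ∈ w, (a : ℕ) < 3

/-- The suffix of `w` of length `t`. -/
def suffixWord {α : Type*} (w : List α) (t : ℕ) : List α := w.drop (w.length - t)

/-- `R_t(w)`: the set of admissible overlap lengths `r` at position `t`, i.e.
those `r` with `t+1 ≤ r ≤ |w|−t−1` such that `w = A·B·V·B` where `B` is the
suffix of `w` of length `t`, `V` is nonempty, and `|B·V| = r`. -/
noncomputable def Rt {α : Type*} (w : List α) (t : ℕ) : Finset ℕ :=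
  (Finset.Icc (t + 1) (w.length - t - 1)).filter fun r =>
    ∃ A V : List α, V ≠ [] ∧
      w = A ++ suffixWord w t ++ V ++ suffixWord w t ∧ t + V.length = r

/-- The deficit `Δ_t(e) = d^{D−1} − N(e;D,t)`. -/
noncomputable def deficit {d D : ℕ} (e : Edge d D) (t : ℕ) : ℝ :=
  (d : ℝ) ^ (D - 1) - (N e D t : ℝ)

/-- The total deficit `Δ(e) = ∑_{t=1}^{D} Δ_t(e)`. -/
noncomputable def totalDeficit {d D : ℕ} (e : Edge d D) : ℝ :=
  ∑ t ∈ Finset.Icc 1 D, deficit e t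

/-- The weighted overlap count
`Ω_d(e) = ∑_{j=1}^{⌈(D+1)/2⌉} ∑_{r ∈ R_j(w(e))} d^{−(r−j)}`. -/
noncomputable def Omega {d D : ℕ} (e : Edge d D) : ℝ :=
  ∑ j ∈ Finset.Icc 1 ((D + 2) / 2), ∑ r ∈ Rt e.word j, (d : ℝ) ^ ((j : ℤ) - (r : ℤ))

/-- The overlap `ov(u,v)`: the largest `j ≤ D` such that the last `j` letters
of `u` equal the first `j` letters of `v`. -/
noncomputable def ov {d D : ℕ} (u v : Vertex d D) : ℕ :=
  sSup {j | j ≤ D ∧ u.word.drop (D - j) = v.word.take j}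

end Kautz

/-!
Deleting the last vertex of a geodesic of length `k + 1` whose `t`-th edge is `e` (`t ≤ k`), or
its first vertex (`t ≥ 2`), leaves a geodesic of length `k` using `e` as its `t`-th, resp.
`(t - 1)`-th, edge. Every vertex of `K(d,D)` has at most `d` out- and `d` in-neighbours, so
`N(e;k+1,t) ≤ d N(e;k,t)` and `N(e;k+1,t+1) ≤ d N(e;k,t)`. Weighting the first bound by
`k + 1 - t` and the second by `t`, each `N(e;k+1,t)` receives total weight `k`, and summing over
`t` gives `k U_{k+1}(e) ≤ d (k + 1) U_k(e)`.
-/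

open Finset in
theorem Nat.mul_sum_range_succ_le_of_le_mul {a b : ℕ → ℕ} {c k : ℕ}
    (h₁ : ∀ i < k, a i ≤ c * b i) (h₂ : ∀ i < k, a (i + 1) ≤ c * b i) :
    k * ∑ i ∈ range (k + 1), a i ≤ c * (k + 1) * ∑ i ∈ range k, b i :=
  calc k * ∑ i ∈ range (k + 1), a i
      = ∑ i ∈ range (k + 1), ((k - i) * a i + i * a i) := by
        rw [mul_sum]
        refine sum_congr rfl fun i hi => ?_
        rw [← add_mul, Nat.sub_add_cancel (Nat.lt_succ_iff.mp (mem_range.mp hi))]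
    _ = ∑ i ∈ range k, (k - i) * a i + ∑ i ∈ range k, (i + 1) * a (i + 1) := by
        rw [sum_add_distrib, sum_range_succ, sum_range_succ']
        simp
    _ ≤ ∑ i ∈ range k, (k - i) * (c * b i) + ∑ i ∈ range k, (i + 1) * (c * b i) := by
        gcongr with i hi i hi
        · exact h₁ i (mem_range.mp hi)
        · exact h₂ i (mem_range.mp hi)
    _ = c * (k + 1) * ∑ i ∈ range k, b i := by
        rw [← sum_add_distrib, mul_sum]
        refine sum_congr rfl fun i hi => ?_
        rw [← add_mul, show k - i + (i + 1) = k + 1 by have := mem_range.mp hi; omega]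
        ring

theorem Set.ncard_le_mul_ncard_of_forall_exists {α β : Type*} {S : Set α} {T : Set β}
    (hS : S.Finite) (hT : T.Finite) (r : α → β → Prop) {n : ℕ}
    (hex : ∀ a ∈ S, ∃ b ∈ T, r a b) (hfiber : ∀ b ∈ T, {a ∈ S | r a b}.ncard ≤ n) :
    S.ncard ≤ n * T.ncard := by
  classical
  lift S to Finset α using hS
  lift T to Finset β using hT
  simp only [Set.ncard_coe_finset, Finset.mem_coe] at hex hfiber ⊢
  have h := Finset.card_mul_le_card_mul (m := 1) (n := n) r
    (fun a ha => by
      obtain ⟨b, hb, hab⟩ := hex a ha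
      exact Finset.card_pos.mpr ⟨b, (Finset.mem_bipartiteAbove r).mpr ⟨hb, hab⟩⟩)
    (fun b hb => by
      rw [← Set.ncard_coe_finset, Finset.coe_bipartiteBelow]; exact hfiber b hb)
  simpa [mul_comm] using h

namespace Kautz

variable {d D : ℕ}

@[ext]
lemma Vertex.ext {u v : Vertex d D} (h : u.word = v.word) : u = v := by
  cases u; cases v; simp_all

instance : Finite (Vertex d D) :=
  Finite.of_injective (β := List.Vector (Fin (d + 1)) D) (fun v => ⟨v.word, v.length_eq⟩)
    fun _ _ h => Vertex.ext (congrArg Subtype.val h)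

lemma Vertex.word_ne_nil (hD : D ≠ 0) (v : Vertex d D) : v.word ≠ [] := by
  intro h
  have := v.length_eq
  simp_all

lemma Adj.exists_tgt_word (hD : D ≠ 0) {u v : Vertex d D} (h : Adj u v) :
    ∃ b, b ≠ u.word.getLastD 0 ∧ v.word = u.word.tail ++ [b] := by
  obtain ⟨w, hlen, hw, hu, hv⟩ := h
  rcases w.eq_nil_or_concat' with rfl | ⟨L, b, rfl⟩
  · simp at hlen
  rw [List.dropLast_concat] at hu
  subst hu
  refine ⟨b, fun hb => ?_, by rw [hv, List.tail_append_of_ne_nil (u.word_ne_nil hD)]⟩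
  have := hw.rel_getLast_head_of_append (u.word_ne_nil hD) (List.cons_ne_nil b [])
  simp_all [List.getLastD_eq_getLast?, List.getLast?_eq_some_getLast (u.word_ne_nil hD)]

lemma Adj.exists_src_word (hD : D ≠ 0) {u v : Vertex d D} (h : Adj u v) :
    ∃ a, a ≠ v.word.headD 0 ∧ u.word = a :: v.word.dropLast := by
  obtain ⟨w, hlen, hw, hu, hv⟩ := h
  rcases w with _ | ⟨a, L⟩
  · simp at hlen
  rw [List.tail_cons] at hv
  subst hv
  refine ⟨a, fun ha => ?_, by rw [hu, List.dropLast_cons_of_ne_nil (v.word_ne_nil hD)]⟩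
  have := List.IsChain.rel_getLast_head_of_append (l₁ := [a]) hw (List.cons_ne_nil a [])
    (v.word_ne_nil hD)
  simp_all [List.head?_eq_some_head (v.word_ne_nil hD)]

lemma ncard_outNeighbors_le (hD : D ≠ 0) (u : Vertex d D) : {v | Adj u v}.ncard ≤ d := by
  let c := u.word.getLastD 0
  calc {v | Adj u v}.ncard ≤ ({c}ᶜ : Set (Fin (d + 1))).ncard := by
        refine Set.ncard_le_ncard_of_injOn (fun v => v.word.getLastD 0) ?_ ?_
        · intro v hv
          obtain ⟨b, hb, hv⟩ := hv.exists_tgt_word hD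
          rw [Set.mem_compl_singleton_iff]
          simpa [hv, c] using hb
        · intro v₁ hv₁ v₂ hv₂ h
          obtain ⟨b₁, -, h₁⟩ := Adj.exists_tgt_word hD hv₁
          obtain ⟨b₂, -, h₂⟩ := Adj.exists_tgt_word hD hv₂
          have hb : b₁ = b₂ := by simpa [h₁, h₂] using h
          ext1
          rw [h₁, h₂, hb]
    _ = d := by
      rw [Set.ncard_compl, Set.ncard_singleton, Nat.card_eq_fintype_card, Fintype.card_fin,
        Nat.add_sub_cancel]

lemma ncard_inNeighbors_le (hD : D ≠ 0) (v : Vertex d D) : {u | Adj u v}.ncard ≤ d := by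
  let c := v.word.headD 0
  calc {u | Adj u v}.ncard ≤ ({c}ᶜ : Set (Fin (d + 1))).ncard := by
        refine Set.ncard_le_ncard_of_injOn (fun u => u.word.headD 0) ?_ ?_
        · intro u hu
          obtain ⟨a, ha, hu⟩ := hu.exists_src_word hD
          rw [Set.mem_compl_singleton_iff]
          simpa [hu, c] using ha
        · intro u₁ hu₁ u₂ hu₂ h
          obtain ⟨a₁, -, h₁⟩ := Adj.exists_src_word hD hu₁
          obtain ⟨a₂, -, h₂⟩ := Adj.exists_src_word hD hu₂
          have ha : a₁ = a₂ := by simpa [h₁, h₂] using h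
          ext1
          rw [h₁, h₂, ha]
    _ = d := by
      rw [Set.ncard_compl, Set.ncard_singleton, Nat.card_eq_fintype_card, Fintype.card_fin,
        Nat.add_sub_cancel]

section Walks

variable {p q : List (Vertex d D)} {x y z : Vertex d D}

lemma isWalk_iff : IsWalk p x y ↔ p.head? = some x ∧ p.getLast? = some y ∧ p.IsChain Adj :=
  Iff.rfl

lemma IsWalk.ne_nil (h : IsWalk p x y) : p ≠ [] := by
  rintro rfl
  simp [IsWalk] at h

lemma isWalk_append_singleton_iff (hq : q ≠ []) :
    IsWalk (q ++ [z]) x y ↔ z = y ∧ IsWalk q x (q.getLast hq) ∧ Adj (q.getLast hq) z := by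
  simp only [isWalk_iff, List.isChain_append, List.head?_append_of_ne_nil _ hq,
    List.getLast?_concat, List.getLast?_eq_some_getLast hq, Option.some.injEq,
    List.isChain_singleton, List.head?_cons, Option.mem_def, forall_eq']
  tauto

lemma isWalk_cons_iff (hq : q ≠ []) :
    IsWalk (z :: q) x y ↔ z = x ∧ IsWalk q (q.head hq) y ∧ Adj z (q.head hq) := by
  obtain ⟨a, q, rfl⟩ := List.exists_cons_of_ne_nil hq
  simp only [isWalk_iff, List.isChain_cons_cons, List.head?_cons, List.head_cons,
    List.getLast?_cons_cons, Option.some.injEq]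
  tauto

lemma IsWalk.concat (hq : IsWalk q x y) (h : Adj y z) : IsWalk (q ++ [z]) x z := by
  have hlast : q.getLast hq.ne_nil = y := by
    simpa [List.getLast?_eq_some_getLast hq.ne_nil] using hq.2.1
  rw [isWalk_append_singleton_iff hq.ne_nil, hlast]
  exact ⟨rfl, hq, h⟩

lemma IsWalk.cons (hq : IsWalk q y z) (h : Adj x y) : IsWalk (x :: q) x z := by
  have hhead : q.head hq.ne_nil = y := by
    simpa [List.head?_eq_some_head hq.ne_nil] using hq.1
  rw [isWalk_cons_iff hq.ne_nil, hhead]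
  exact ⟨rfl, hq, h⟩

lemma dist_add_one_le_length (h : IsWalk p x y) : dist x y + 1 ≤ p.length := by
  have := List.length_pos_of_ne_nil h.ne_nil
  have : dist x y ≤ p.length - 1 := Nat.sInf_le ⟨p, h, by omega⟩
  omega

lemma exists_isWalk_length_eq_dist (h : IsWalk p x y) :
    ∃ q, IsWalk q x y ∧ q.length = dist x y + 1 :=
  Nat.sInf_mem (⟨p.length - 1, p, h, by
    have := List.length_pos_of_ne_nil h.ne_nil
    omega⟩ : ∃ k, ∃ p', IsWalk p' x y ∧ p'.length = k + 1)

lemma dist_le_dist_add_one_of_adj_right (h : IsWalk p x y) (hyz : Adj y z) :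
    dist x z ≤ dist x y + 1 := by
  obtain ⟨q, hq, hlen⟩ := exists_isWalk_length_eq_dist h
  simpa [hlen] using dist_add_one_le_length (hq.concat hyz)

lemma dist_le_dist_add_one_of_adj_left (h : IsWalk p y z) (hxy : Adj x y) :
    dist x z ≤ dist y z + 1 := by
  obtain ⟨q, hq, hlen⟩ := exists_isWalk_length_eq_dist h
  simpa [hlen] using dist_add_one_le_length (hq.cons hxy)

end Walks

def geodesicPairsThrough (e : Edge d D) (k t : ℕ) : Set (Vertex d D × Vertex d D) :=
  {xy | dist xy.1 xy.2 = k ∧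
    ∃ p : List (Vertex d D), IsWalk p xy.1 xy.2 ∧ p.length = k + 1 ∧
      p[t-1]? = some e.src ∧ p[t]? = some e.tgt}

lemma N_eq_ncard (e : Edge d D) (k t : ℕ) : N e k t = (geodesicPairsThrough e k t).ncard := rfl

section Geodesics

variable {e : Edge d D} {k t : ℕ} {x y : Vertex d D}

lemma mem_geodesicPairsThrough : (x, y) ∈ geodesicPairsThrough e k t ↔ dist x y = k ∧
    ∃ p : List (Vertex d D), IsWalk p x y ∧ p.length = k + 1 ∧
      p[t-1]? = some e.src ∧ p[t]? = some e.tgt :=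
  Iff.rfl

lemma exists_adj_of_mem_geodesicPairsThrough_right
    (h : (x, y) ∈ geodesicPairsThrough e (k + 1) t) (ht : t ≤ k) :
    ∃ y', (x, y') ∈ geodesicPairsThrough e k t ∧ Adj y' y := by
  obtain ⟨hdist, p, hp, hlen, hsrc, htgt⟩ := mem_geodesicPairsThrough.mp h
  rcases p.eq_nil_or_concat' with rfl | ⟨q, z, rfl⟩
  · simp at hlen
  have hq : q ≠ [] := by rintro rfl; simp at hlen
  obtain ⟨rfl, hq', hadj⟩ := (isWalk_append_singleton_iff hq).mp hp
  simp only [List.length_append, List.length_singleton, Nat.add_right_cancel_iff] at hlen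
  refine ⟨q.getLast hq, mem_geodesicPairsThrough.mpr
    ⟨le_antisymm ?_ ?_, q, hq', hlen, ?_, ?_⟩, hadj⟩
  · have := dist_add_one_le_length hq'
    omega
  · have := dist_le_dist_add_one_of_adj_right hq' hadj
    omega
  · rwa [List.getElem?_append_left (by omega)] at hsrc
  · rwa [List.getElem?_append_left (by omega)] at htgt

lemma exists_adj_of_mem_geodesicPairsThrough_left
    (h : (x, y) ∈ geodesicPairsThrough e (k + 1) (t + 1)) (ht : 1 ≤ t) :
    ∃ x', (x', y) ∈ geodesicPairsThrough e k t ∧ Adj x x' := by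
  obtain ⟨hdist, p, hp, hlen, hsrc, htgt⟩ := mem_geodesicPairsThrough.mp h
  rcases p with _ | ⟨z, q⟩
  · simp at hlen
  have hq : q ≠ [] := by rintro rfl; simp at hlen
  obtain ⟨rfl, hq', hadj⟩ := (isWalk_cons_iff hq).mp hp
  simp only [List.length_cons, Nat.add_right_cancel_iff] at hlen
  refine ⟨q.head hq, mem_geodesicPairsThrough.mpr
    ⟨le_antisymm ?_ ?_, q, hq', hlen, ?_, ?_⟩, hadj⟩
  · have := dist_add_one_le_length hq'
    omega
  · have := dist_le_dist_add_one_of_adj_left hq' hadj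
    omega
  · rwa [show t + 1 - 1 = t - 1 + 1 by omega, List.getElem?_cons_succ] at hsrc
  · rwa [List.getElem?_cons_succ] at htgt

end Geodesics

section Counting

variable (e : Edge d D) {k t : ℕ}

lemma N_succ_le_mul_N (hD : D ≠ 0) (ht : t ≤ k) : N e (k + 1) t ≤ d * N e k t := by
  rw [N_eq_ncard, N_eq_ncard]
  refine Set.ncard_le_mul_ncard_of_forall_exists (Set.toFinite _) (Set.toFinite _)
    (fun a b => a.1 = b.1 ∧ Adj b.2 a.2) ?_ ?_
  · rintro ⟨x, y⟩ h
    obtain ⟨y', hy', hadj⟩ := exists_adj_of_mem_geodesicPairsThrough_right h ht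
    exact ⟨(x, y'), hy', rfl, hadj⟩
  · rintro ⟨x, y'⟩ -
    calc _ ≤ (Prod.mk x '' {y | Adj y' y}).ncard :=
          Set.ncard_le_ncard (by rintro ⟨_, y⟩ ⟨-, rfl, h⟩; exact ⟨y, h, rfl⟩)
      _ = {y | Adj y' y}.ncard := Set.ncard_image_of_injective _ (Prod.mk_right_injective x)
      _ ≤ d := ncard_outNeighbors_le hD y'

lemma N_succ_succ_le_mul_N (hD : D ≠ 0) (ht : 1 ≤ t) : N e (k + 1) (t + 1) ≤ d * N e k t := by
  rw [N_eq_ncard, N_eq_ncard]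
  refine Set.ncard_le_mul_ncard_of_forall_exists (Set.toFinite _) (Set.toFinite _)
    (fun a b => Adj a.1 b.1 ∧ a.2 = b.2) ?_ ?_
  · rintro ⟨x, y⟩ h
    obtain ⟨x', hx', hadj⟩ := exists_adj_of_mem_geodesicPairsThrough_left h ht
    exact ⟨(x', y), hx', hadj, rfl⟩
  · rintro ⟨x', y⟩ -
    calc _ ≤ ((·, y) '' {x | Adj x x'}).ncard :=
          Set.ncard_le_ncard (by rintro ⟨x, _⟩ ⟨-, h, rfl⟩; exact ⟨x, h, rfl⟩)
      _ = {x | Adj x x'}.ncard := Set.ncard_image_of_injective _ (Prod.mk_left_injective y)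
      _ ≤ d := ncard_inNeighbors_le hD x'

lemma U_eq_sum_range : U e k = ∑ i ∈ Finset.range k, N e k (i + 1) := by
  rw [U, ← Finset.Ico_add_one_right_eq_Icc, Finset.sum_Ico_eq_sum_range, Nat.add_sub_cancel]
  simp only [add_comm]

lemma mul_U_succ_le (hD : D ≠ 0) : k * U e (k + 1) ≤ d * (k + 1) * U e k := by
  rw [U_eq_sum_range, U_eq_sum_range]
  exact Nat.mul_sum_range_succ_le_of_le_mul (fun i hi => N_succ_le_mul_N e hD hi)
    fun i _ => N_succ_succ_le_mul_N e hD (Nat.le_add_left 1 i)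

end Counting

end Kautz

theorem statement7_general (d D : ℕ) (e : Kautz.Edge d D)
    (k : ℕ) (hkD : k ≤ D) :
    (((k : ℝ) - 1) / ((d : ℝ) * (k : ℝ))) * (Kautz.U e k : ℝ)
      ≤ (Kautz.U e (k - 1) : ℝ) := by
  rcases k with _ | k
  · simp [Kautz.U]
  have h := Kautz.mul_U_succ_le e (k := k) (by omega)
  rw [Nat.add_sub_cancel, div_mul_eq_mul_div]
  refine div_le_of_le_mul₀ (by positivity) (by positivity) ?_
  have h' : (k : ℝ) * Kautz.U e (k + 1) ≤ d * (k + 1) * Kautz.U e k := by exact_mod_cast h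
  push_cast
  linarith

/-- For `d ≥ 2`, any directed edge `e` of `K(d,D)` and any `2 ≤ k ≤ D`,
`U_{k−1}(e) ≥ ((k−1)/(d·k))·U_k(e)`. -/
theorem statement7 (d D : ℕ) (hd : 2 ≤ d) (e : Kautz.Edge d D)
    (k : ℕ) (hk2 : 2 ≤ k) (hkD : k ≤ D) :
    (((k : ℝ) - 1) / ((d : ℝ) * (k : ℝ))) * (Kautz.U e k : ℝ)
      ≤ (Kautz.U e (k - 1) : ℝ) :=
  statement7_general d D e k hkD
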